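/- Let c_1 < ⋯ < c_m be distinct real numbers, 1 ≤ k ≤ m, and ℓ ≤ T ≤ u real numbers. Let i_L = min S_k(ℓ) and i_R = max S_k(u). Then S_k(T) ⊆ {i : i_L ≤ i ≤ i_R}; that is, for every position of the voter inside [ℓ, u], only candidates with indices between i_L and i_R can be among the voter's top k candidates (and hence receive a positive score under a k-truncated scoring rule). -/
import Mathlib


/-- Candidate `i` is ranked above candidate `j` by a voter at position `T`:
either strictly closer, or tied in distance with the smaller index winning. -/
def prefers {m : ℕ} (c : Fin m → ℝ) (T : ℝ) (i j : Fin m) : Prop :=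
  |T - c i| < |T - c j| ∨ (|T - c i| = |T - c j| ∧ i < j)

noncomputable instance {m : ℕ} (c : Fin m → ℝ) (T : ℝ) (i j : Fin m) :
    Decidable (prefers c T i j) :=
  inferInstanceAs (Decidable (_ ∨ _))

/-- The set of indices of the `k` highest-ranked candidates for a voter at position `T`:
those with fewer than `k` candidates ranked above them. -/
noncomputable def topk {m : ℕ} (c : Fin m → ℝ) (T : ℝ) (k : ℕ) : Finset (Fin m) :=
  Finset.univ.filter fun i => (Finset.univ.filter fun j => prefers c T j i).card < k

namespace VoteRangeAux

open Finset

variable {m : ℕ}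

/-- rank of a candidate: number of candidates ranked above it -/
noncomputable def rk (c : Fin m → ℝ) (T : ℝ) (i : Fin m) : ℕ :=
  (Finset.univ.filter fun j => prefers c T j i).card

lemma prefers_irrefl (c : Fin m → ℝ) (T : ℝ) (i : Fin m) : ¬ prefers c T i i := by
  rintro (h | ⟨_, h⟩) <;> exact lt_irrefl _ h

lemma prefers_total (c : Fin m → ℝ) (T : ℝ) {i j : Fin m} (hij : i ≠ j) :
    prefers c T i j ∨ prefers c T j i := by
  rcases lt_trichotomy (|T - c i|) (|T - c j|) with h | h | h
  · exact Or.inl (Or.inl h)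
  · rcases lt_or_gt_of_ne hij with h' | h'
    · exact Or.inl (Or.inr ⟨h, h'⟩)
    · exact Or.inr (Or.inr ⟨h.symm, h'⟩)
  · exact Or.inr (Or.inl h)

lemma prefers_trans (c : Fin m → ℝ) (T : ℝ) {i j l : Fin m}
    (h1 : prefers c T i j) (h2 : prefers c T j l) : prefers c T i l := by
  rcases h1 with h1 | ⟨h1, h1'⟩ <;> rcases h2 with h2 | ⟨h2, h2'⟩
  · exact Or.inl (h1.trans h2)
  · exact Or.inl (h2 ▸ h1)
  · exact Or.inl (h1 ▸ h2)
  · exact Or.inr ⟨h1.trans h2, h1'.trans h2'⟩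

lemma rk_lt_rk (c : Fin m → ℝ) (T : ℝ) {i j : Fin m} (h : prefers c T i j) :
    rk c T i < rk c T j := by
  have hsub : insert i (Finset.univ.filter fun x => prefers c T x i) ⊆
      Finset.univ.filter fun x => prefers c T x j := by
    intro x hx
    rcases Finset.mem_insert.mp hx with rfl | hx
    · simp [h]
    · simp only [Finset.mem_filter, Finset.mem_univ, true_and] at hx ⊢
      exact prefers_trans c T hx h
  have hni : i ∉ Finset.univ.filter fun x => prefers c T x i := by
    simp [prefers_irrefl]
  calc rk c T i < rk c T i + 1 := Nat.lt_succ_self _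
    _ = (insert i (Finset.univ.filter fun x => prefers c T x i)).card := by
        rw [Finset.card_insert_of_notMem hni]; rfl
    _ ≤ rk c T j := Finset.card_le_card hsub

lemma prefers_of_rk_lt (c : Fin m → ℝ) (T : ℝ) {i j : Fin m}
    (h : rk c T i < rk c T j) : prefers c T i j := by
  have hij : i ≠ j := by rintro rfl; exact lt_irrefl _ h
  rcases prefers_total c T hij with h' | h'
  · exact h'
  · exact absurd (rk_lt_rk c T h') (by omega)

lemma rk_lt (c : Fin m → ℝ) (T : ℝ) (i : Fin m) : rk c T i < m := by
  have hsub : (Finset.univ.filter fun x => prefers c T x i) ⊆ Finset.univ.erase i := by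
    intro x hx
    simp only [Finset.mem_filter, Finset.mem_univ, true_and] at hx
    refine Finset.mem_erase.mpr ⟨fun h => ?_, Finset.mem_univ _⟩
    exact prefers_irrefl c T i (h ▸ hx)
  calc rk c T i ≤ (Finset.univ.erase i).card := Finset.card_le_card hsub
    _ < Finset.univ.card := Finset.card_erase_lt_of_mem (Finset.mem_univ i)
    _ = m := Finset.card_fin m

lemma rk_injective (c : Fin m → ℝ) (T : ℝ) : Function.Injective (rk c T) := by
  intro i j h
  by_contra hij
  rcases prefers_total c T hij with h' | h' <;>
    · have := rk_lt_rk c T h'; omega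

lemma mem_topk_iff (c : Fin m → ℝ) (T : ℝ) (k : ℕ) (i : Fin m) :
    i ∈ topk c T k ↔ rk c T i < k := by
  simp [topk, rk]

lemma card_topk (c : Fin m → ℝ) (T : ℝ) {k : ℕ} (hkm : k ≤ m) :
    (topk c T k).card = k := by
  have hbij : Function.Bijective (fun i => (⟨rk c T i, rk_lt c T i⟩ : Fin m)) := by
    refine Finite.injective_iff_bijective.mp ?_
    intro i j h
    exact rk_injective c T (by simpa [Fin.mk.injEq] using h)
  have : (topk c T k).card = (Finset.range k).card := by
    refine Finset.card_bij (fun i _ => rk c T i) ?_ ?_ ?_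
    · intro a ha
      rw [mem_topk_iff] at ha
      exact Finset.mem_range.mpr ha
    · intro a _ b _ h
      exact rk_injective c T h
    · intro t ht
      have htk : t < k := Finset.mem_range.mp ht
      obtain ⟨i, hi⟩ := hbij.2 ⟨t, lt_of_lt_of_le htk hkm⟩
      have : rk c T i = t := by simpa [Fin.mk.injEq] using hi
      exact ⟨i, (mem_topk_iff c T k i).mpr (by omega), this⟩
  simpa using this

/-- monotonicity: a right candidate beating a left one keeps beating as T moves right -/
lemma prefers_mono_right (c : Fin m → ℝ) (hc : StrictMono c) {i j : Fin m} (hij : i < j)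
    {ℓ T : ℝ} (hlT : ℓ ≤ T) (h : prefers c ℓ j i) : prefers c T j i := by
  have hcij : c i < c j := hc hij
  rcases h with h | ⟨_, h'⟩
  · left
    rcases abs_cases (ℓ - c j) with ⟨e1, s1⟩ | ⟨e1, s1⟩ <;>
    rcases abs_cases (ℓ - c i) with ⟨e2, s2⟩ | ⟨e2, s2⟩ <;>
    rcases abs_cases (T - c j) with ⟨e3, s3⟩ | ⟨e3, s3⟩ <;>
    rcases abs_cases (T - c i) with ⟨e4, s4⟩ | ⟨e4, s4⟩ <;>
      rw [e1, e2] at h <;> rw [e3, e4] <;> linarith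
  · exact absurd h' (not_lt.mpr hij.le)

lemma prefers_mono_left (c : Fin m → ℝ) (hc : StrictMono c) {i j : Fin m} (hij : j < i)
    {T u : ℝ} (hTu : T ≤ u) (h : prefers c u j i) : prefers c T j i := by
  have hcij : c j < c i := hc hij
  rcases h with h | ⟨h', _⟩
  · left
    rcases abs_cases (u - c j) with ⟨e1, s1⟩ | ⟨e1, s1⟩ <;>
    rcases abs_cases (u - c i) with ⟨e2, s2⟩ | ⟨e2, s2⟩ <;>
    rcases abs_cases (T - c j) with ⟨e3, s3⟩ | ⟨e3, s3⟩ <;>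
    rcases abs_cases (T - c i) with ⟨e4, s4⟩ | ⟨e4, s4⟩ <;>
      rw [e1, e2] at h <;> rw [e3, e4] <;> linarith
  · have hle : |T - c j| ≤ |T - c i| := by
      rcases abs_cases (u - c j) with ⟨e1, s1⟩ | ⟨e1, s1⟩ <;>
      rcases abs_cases (u - c i) with ⟨e2, s2⟩ | ⟨e2, s2⟩ <;>
      rcases abs_cases (T - c j) with ⟨e3, s3⟩ | ⟨e3, s3⟩ <;>
      rcases abs_cases (T - c i) with ⟨e4, s4⟩ | ⟨e4, s4⟩ <;>
        rw [e1, e2] at h' <;> rw [e3, e4] <;> linarith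
    rcases lt_or_eq_of_le hle with h | h
    · exact Or.inl h
    · exact Or.inr ⟨h, hij⟩

end VoteRangeAux

open VoteRangeAux in
/-- Vote-range lemma: for every position `T ∈ [ℓ, u]`, only candidates with indices
between `i_L = min S_k(ℓ)` and `i_R = max S_k(u)` can be among the voter's top `k`. -/
theorem topk_subset_Icc {m : ℕ} (c : Fin m → ℝ) (hc : StrictMono c)
    (k : ℕ) (hk1 : 1 ≤ k) (hkm : k ≤ m) (ℓ T u : ℝ) (hlT : ℓ ≤ T) (hTu : T ≤ u)
    (hl : (topk c ℓ k).Nonempty) (hu : (topk c u k).Nonempty) :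
    topk c T k ⊆ Finset.Icc ((topk c ℓ k).min' hl) ((topk c u k).max' hu) := by
  intro i hi
  rw [Finset.mem_Icc]
  have hiT : rk c T i < k := (mem_topk_iff c T k i).mp hi
  constructor
  · by_contra hcon
    push_neg at hcon
    -- every element of topk ℓ beats i at T
    have hsub : topk c ℓ k ⊆ Finset.univ.filter fun j => prefers c T j i := by
      intro j hj
      have hji : i < j := lt_of_lt_of_le hcon (Finset.min'_le _ j hj)
      have hinot : i ∉ topk c ℓ k := fun h =>
        absurd (Finset.min'_le _ i h) (not_le.mpr hcon)
      have hri : k ≤ rk c ℓ i := not_lt.mp (fun h => hinot ((mem_topk_iff c ℓ k i).mpr h))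
      have hrj : rk c ℓ j < k := (mem_topk_iff c ℓ k j).mp hj
      have hpref : prefers c ℓ j i := prefers_of_rk_lt c ℓ (by omega)
      simp only [Finset.mem_filter, Finset.mem_univ, true_and]
      exact prefers_mono_right c hc hji hlT hpref
    have := Finset.card_le_card hsub
    rw [card_topk c ℓ hkm] at this
    exact absurd hiT (not_lt.mpr (this.trans_eq rfl))
  · by_contra hcon
    push_neg at hcon
    have hsub : topk c u k ⊆ Finset.univ.filter fun j => prefers c T j i := by
      intro j hj
      have hji : j < i := lt_of_le_of_lt (Finset.le_max' _ j hj) hcon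
      have hinot : i ∉ topk c u k := fun h =>
        absurd (Finset.le_max' _ i h) (not_le.mpr hcon)
      have hri : k ≤ rk c u i := not_lt.mp (fun h => hinot ((mem_topk_iff c u k i).mpr h))
      have hrj : rk c u j < k := (mem_topk_iff c u k j).mp hj
      have hpref : prefers c u j i := prefers_of_rk_lt c u (by omega)
      simp only [Finset.mem_filter, Finset.mem_univ, true_and]
      exact prefers_mono_left c hc hji hTu hpref
    have := Finset.card_le_card hsub
    rw [card_topk c u hkm] at this
    exact absurd hiT (not_lt.mpr (this.trans_eq rfl))
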